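/- arXiv:math/0503159 — 5 statements merged into one kernel-verified Lean document; each statement's English description precedes it below -/
import Mathlib

section
/- There exists a unique function C : ℂ → ℂ such that Φ₋₁(X, λ) = C(λ) Φ₀(X, λ) + Φ₁(X, λ) for all X, λ ∈ ℂ; this function C is entire, and it satisfies the relation C(λ) f₀(λ) = ω^{m/4} f₀(ω^{−2} λ) − ω^{−m/4} f₀(ω² λ) for every λ ∈ ℂ, where f₀(λ) := Φ₀(0, λ). -/
/-!
All three of `Φ₀(·, λ)`, `Φ₁(·, λ)`, `Φ₋₁(·, λ)` solve `ψ'' = (X^m + λ) ψ`, because `X ↦ ωX` maps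
solutions for `ω²λ` to solutions for `λ` when `ω^{m+2} = 1`. Along the segment `[0, X]` the pair
`(ψ, ψ')` solves a linear system, so Gronwall shows that a solution is determined by
`(ψ(0), ψ'(0))` and the Wronskian at `0` decides linear dependence.

On the positive real axis `Φ₀` is subdominant while `Φ₁` and `Φ₋₁` are dominant with the same
normalisation: multiplied by `r^{m/4} e^{-(2/(m+2)) r^{(m+2)/2}}` they tend to `0`, `1` and `1`.
Hence `Φ₀, Φ₁` are independent, `Φ₋₁ = C Φ₀ + D Φ₁`, and the limits force `D = 1`. Since
`Φ₀(·, λ) ≠ 0`, `C` is unique and is locally a quotient `(Φ₋₁ - Φ₁)(X₀, λ) / Φ₀(X₀, λ)` of entire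
functions of `λ`; the relation is the identity at `X = 0`.
-/

open Complex Filter Real

noncomputable section

/-- The point `r e^{iθ}` in the complex plane. -/
def rayPt (r θ : ℝ) : ℂ := (r : ℂ) * Complex.exp (θ * Complex.I)

/-- The branch `X^s := exp(s(log r + iθ))` for `X = r e^{iθ}`. -/
def rayPow (r θ : ℝ) (s : ℂ) : ℂ := Complex.exp (s * ((Real.log r : ℂ) + θ * Complex.I))

/-- `ω := exp(2πi/(m+2))`. -/
def om (m : ℕ) : ℂ := Complex.exp (2 * Real.pi * Complex.I / (m + 2))

/-- `ω^s := exp((2πi/(m+2)) s)`. -/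
def omPow (m : ℕ) (s : ℂ) : ℂ := Complex.exp ((2 * Real.pi * Complex.I / (m + 2)) * s)

/-- Sibuya's asymptotic characterization for the equation `-Φ'' + (X^m + λ)Φ = 0`:
`Φ(re^{iθ}) (re^{iθ})^{m/4} exp((2/(m+2))(re^{iθ})^{(m+2)/2}) → 1` as `r → +∞`,
for every `|θ| < 3π/(m+2)`. -/
def SibAsympSp (m : ℕ) (Φ : ℂ → ℂ) : Prop :=
  ∀ θ : ℝ, |θ| < 3 * Real.pi / (m + 2) →
    Filter.Tendsto
      (fun r : ℝ => Φ (rayPt r θ) * rayPow r θ ((m : ℂ) / 4) *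
        Complex.exp ((2 / ((m : ℂ) + 2)) * rayPow r θ (((m : ℂ) + 2) / 2)))
      Filter.atTop (nhds 1)

open Set Topology

theorem eqOn_zero_of_hasDerivWithinAt_clm {E : Type*} [NormedAddCommGroup E] [NormedSpace ℝ E]
    {A : ℝ → E →L[ℝ] E} {f : ℝ → E} {a b : ℝ} (hA : ContinuousOn A (Icc a b))
    (hf : ContinuousOn f (Icc a b))
    (hf' : ∀ t ∈ Ico a b, HasDerivWithinAt f (A t (f t)) (Ici t) t) (ha : f a = 0) :
    EqOn f 0 (Icc a b) := by
  obtain ⟨Q, hQ⟩ := isCompact_Icc.exists_bound_of_continuousOn hA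
  have hlip : ∀ t ∈ Ico a b, LipschitzOnWith Q.toNNReal (A t) univ := fun t ht =>
    ((A t).lipschitz.weaken (by
      rw [← NNReal.coe_le_coe, coe_nnnorm, Real.coe_toNNReal']
      exact (hQ t (Ico_subset_Icc_self ht)).trans (le_max_left _ _))).lipschitzOnWith
  refine ODE_solution_unique_of_mem_Icc_right hlip hf hf' (fun _ _ => trivial) continuousOn_const
    (fun t _ => ?_) (fun _ _ => trivial) ha
  rw [Pi.zero_apply, map_zero]
  exact hasDerivWithinAt_const t (Ici t) 0

def schrodingerSolutions (V : ℂ → ℂ) : Submodule ℂ (ℂ → ℂ) where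
  carrier := {ψ | Differentiable ℂ ψ ∧ ∀ X, deriv (deriv ψ) X = V X * ψ X}
  add_mem' := by
    rintro f g ⟨hf, hf'⟩ ⟨hg, hg'⟩
    refine ⟨hf.add hg, fun X => ?_⟩
    have hfg : deriv (f + g) = deriv f + deriv g := funext fun Y => deriv_add (hf Y) (hg Y)
    rw [hfg, deriv_add (hf.deriv X) (hg.deriv X), hf', hg', Pi.add_apply]
    ring
  zero_mem' := ⟨differentiable_const 0, fun X => by simp⟩
  smul_mem' := by
    rintro c f ⟨hf, hf'⟩
    refine ⟨hf.const_smul c, fun X => ?_⟩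
    have hcf : deriv (c • f) = c • deriv f := funext fun Y => deriv_const_smul c (hf Y)
    rw [hcf, deriv_const_smul c (hf.deriv X)]
    simp only [Pi.smul_apply, smul_eq_mul, hf']
    ring

namespace schrodingerSolutions

variable {V : ℂ → ℂ} {f g h ψ : ℂ → ℂ}

theorem eq_zero_of_initial (hV : Continuous V) (hψ : ψ ∈ schrodingerSolutions V)
    (h0 : ψ 0 = 0) (h1 : deriv ψ 0 = 0) : ψ = 0 := by
  obtain ⟨hd, hode⟩ := hψ
  funext w
  -- along the segment `t ↦ t w` the pair `(ψ, w ψ')` solves a linear first-order system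
  let B₀ : ℂ × ℂ →L[ℝ] ℂ × ℂ := .inl ℝ ℂ ℂ ∘L .snd ℝ ℂ ℂ
  let B₁ : ℂ × ℂ →L[ℝ] ℂ × ℂ := .inr ℝ ℂ ℂ ∘L .fst ℝ ℂ ℂ
  let A : ℝ → ℂ × ℂ →L[ℝ] ℂ × ℂ := fun t => B₀ + (w ^ 2 * V (t * w)) • B₁
  let F : ℝ → ℂ × ℂ := fun t => (ψ (t * w), w * deriv ψ (t * w))
  have hray : ∀ (u : ℂ → ℂ), Differentiable ℂ u → ∀ t : ℝ,
      HasDerivAt (fun s : ℝ => u (s * w)) (deriv u (t * w) * w) t := fun u hu t =>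
    ((hu _).hasDerivAt.comp (t : ℂ) (hasDerivAt_mul_const w)).comp_ofReal
  have hF : ∀ t : ℝ, HasDerivAt F (A t (F t)) t := by
    intro t
    convert (hray ψ hd t).prodMk ((hray _ hd.deriv t).const_mul w) using 1
    simp only [A, B₀, B₁, F, add_apply, ContinuousLinearMap.comp_apply,
      ContinuousLinearMap.coe_snd', ContinuousLinearMap.inl_apply, smul_apply,
      ContinuousLinearMap.coe_fst', ContinuousLinearMap.inr_apply, Prod.smul_mk, smul_eq_mul,
      mul_zero, Prod.mk_add_mk, add_zero, zero_add, hode, Prod.mk.injEq]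
    constructor <;> ring
  have hA : Continuous A := continuous_const.add
    (((continuous_const.mul (hV.comp (Complex.continuous_ofReal.mul continuous_const)))).smul
      continuous_const)
  have hzero := eqOn_zero_of_hasDerivWithinAt_clm hA.continuousOn
    (continuous_iff_continuousAt.2 fun t => (hF t).continuousAt).continuousOn
    (fun t _ => (hF t).hasDerivWithinAt) (by simp [F, h0, h1])
    (right_mem_Icc.2 zero_le_one)
  simpa [F] using congrArg Prod.fst hzero

theorem eq_of_initial (hV : Continuous V) (hf : f ∈ schrodingerSolutions V)
    (hg : g ∈ schrodingerSolutions V) (h0 : f 0 = g 0) (h1 : deriv f 0 = deriv g 0) : f = g := by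
  refine sub_eq_zero.1 (eq_zero_of_initial hV (sub_mem hf hg) (by simp [h0]) ?_)
  rw [deriv_sub (hf.1 0) (hg.1 0), h1, sub_self]

theorem deriv_smul_add_smul (hf : f ∈ schrodingerSolutions V) (hg : g ∈ schrodingerSolutions V)
    (a b : ℂ) (x : ℂ) : deriv (a • f + b • g) x = a * deriv f x + b * deriv g x :=
  (((hf.1 x).hasDerivAt.const_smul a).add ((hg.1 x).hasDerivAt.const_smul b)).deriv

theorem wronskian_ne_zero (hV : Continuous V) (hf : f ∈ schrodingerSolutions V)
    (hg : g ∈ schrodingerSolutions V) (hfg : LinearIndependent ℂ ![f, g]) :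
    f 0 * deriv g 0 - g 0 * deriv f 0 ≠ 0 := by
  intro hW
  have hdep : ∀ a b : ℂ, a * f 0 = b * g 0 → a * deriv f 0 = b * deriv g 0 → a = 0 ∧ b = 0 := by
    intro a b h0 h1
    have hab : a • f + (-b) • g = 0 := by
      refine eq_zero_of_initial hV
        (add_mem (Submodule.smul_mem _ a hf) (Submodule.smul_mem _ (-b) hg)) ?_ ?_
      · simp only [Pi.add_apply, Pi.smul_apply, smul_eq_mul, h0]
        ring
      · rw [deriv_smul_add_smul hf hg, h1]
        ring
    obtain ⟨ha, hb⟩ := LinearIndependent.pair_iff.1 hfg a (-b) hab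
    exact ⟨ha, neg_eq_zero.1 hb⟩
  obtain ⟨-, hf0⟩ := hdep (g 0) (f 0) (by ring) (by linear_combination -hW)
  obtain ⟨-, hf1⟩ := hdep (deriv g 0) (deriv f 0) (by linear_combination hW) (by ring)
  exact hfg.ne_zero 0 (eq_zero_of_initial hV hf hf0 hf1)

theorem exists_eq_smul_add_smul (hV : Continuous V) (hf : f ∈ schrodingerSolutions V)
    (hg : g ∈ schrodingerSolutions V) (hh : h ∈ schrodingerSolutions V)
    (hfg : LinearIndependent ℂ ![f, g]) : ∃ a b : ℂ, h = a • f + b • g := by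
  have hW := wronskian_ne_zero hV hf hg hfg
  refine ⟨(h 0 * deriv g 0 - g 0 * deriv h 0) / (f 0 * deriv g 0 - g 0 * deriv f 0),
    (f 0 * deriv h 0 - h 0 * deriv f 0) / (f 0 * deriv g 0 - g 0 * deriv f 0),
    eq_of_initial hV hh (add_mem (Submodule.smul_mem _ _ hf) (Submodule.smul_mem _ _ hg)) ?_ ?_⟩
  · simp only [Pi.add_apply, Pi.smul_apply, smul_eq_mul]
    rw [div_mul_eq_mul_div, div_mul_eq_mul_div, ← add_div, eq_div_iff hW]
    ring
  · rw [deriv_smul_add_smul hf hg, div_mul_eq_mul_div, div_mul_eq_mul_div, ← add_div,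
      eq_div_iff hW]
    ring

theorem comp_const_mul_mem (hψ : ψ ∈ schrodingerSolutions V) (c a : ℂ) :
    (fun X => c * ψ (a * X)) ∈ schrodingerSolutions (fun X => a ^ 2 * V (a * X)) := by
  obtain ⟨hd, hode⟩ := hψ
  have hderiv : ∀ u : ℂ → ℂ, Differentiable ℂ u → ∀ c : ℂ,
      deriv (fun X => c * u (a * X)) = fun X => c * a * deriv u (a * X) := fun u hu c =>
    funext fun X => by
      rw [deriv_const_mul c (by fun_prop), deriv_comp_mul_left, smul_eq_mul, mul_assoc]
  refine ⟨by fun_prop, fun X => ?_⟩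
  rw [hderiv ψ hd, hderiv _ hd.deriv]
  beta_reduce
  rw [hode]
  ring

theorem comp_const_mul_mem_of_pow_eq_one {m : ℕ} {μ lam a : ℂ}
    (hψ : ψ ∈ schrodingerSolutions (fun X => X ^ m + μ)) (c : ℂ) (ha : a ^ (m + 2) = 1)
    (hlam : a ^ 2 * μ = lam) :
    (fun X => c * ψ (a * X)) ∈ schrodingerSolutions (fun X => X ^ m + lam) := by
  convert comp_const_mul_mem hψ c a using 3 with X
  rw [← hlam]
  linear_combination (-X ^ m) * ha

end schrodingerSolutions

section Asymptotics

variable {α β : Type*} {l : Filter α} {p : α → β} {G : α → ℂ} {f g h : β → ℂ}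

theorem coeff_eq_of_tendsto [l.NeBot] {a b c : ℂ}
    (hf : Tendsto (fun r => f (p r) * G r) l (𝓝 0)) (hg : Tendsto (fun r => g (p r) * G r) l (𝓝 1))
    (hh : Tendsto (fun r => h (p r) * G r) l (𝓝 c)) (hfgh : h = a • f + b • g) : b = c := by
  refine tendsto_nhds_unique ?_ hh
  convert (hf.const_mul a).add (hg.const_mul b) using 2 with r
  · simp only [hfgh, Pi.add_apply, Pi.smul_apply, smul_eq_mul]
    ring
  · ring

theorem linearIndependent_of_tendsto [l.NeBot] (hf0 : f ≠ 0)
    (hf : Tendsto (fun r => f (p r) * G r) l (𝓝 0))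
    (hg : Tendsto (fun r => g (p r) * G r) l (𝓝 1)) :
    LinearIndependent ℂ ![f, g] := by
  refine LinearIndependent.pair_iff.2 fun s t hst => ?_
  obtain rfl : t = 0 := coeff_eq_of_tendsto (h := 0) hf hg (by simp) hst.symm
  rw [zero_smul, add_zero, smul_eq_zero] at hst
  exact ⟨hst.resolve_right hf0, rfl⟩

end Asymptotics

theorem om_pow_add_two (m : ℕ) : om m ^ (m + 2) = 1 := by
  have hm : (m : ℂ) + 2 ≠ 0 := by exact_mod_cast (m + 1).succ_ne_zero
  rw [om, ← Complex.exp_nat_mul, Nat.cast_add, Nat.cast_two, mul_div_cancel₀ _ hm]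
  exact Complex.exp_two_pi_mul_I

section Sibuya

variable {m : ℕ} {Φ : ℂ → ℂ}

/-- `r^{m/4} e^{-(2/(m+2)) r^{(m+2)/2}}`; multiplying by it normalises the solutions that grow
along the positive real axis. -/
def decayWeight (m : ℕ) (r : ℝ) : ℂ :=
  rayPow r 0 ((m : ℂ) / 4) * Complex.exp (-(2 / ((m : ℂ) + 2)) * rayPow r 0 (((m : ℂ) + 2) / 2))

theorem rayPt_zero_right (r : ℝ) : rayPt r 0 = r := by
  simp [rayPt]

theorem rayPt_mul_angle (r k : ℝ) : rayPt r (k * (2 * π / (m + 2))) = omPow m k * r := by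
  rw [rayPt, omPow, mul_comm]
  congr 2
  push_cast
  ring

theorem rayPow_mul_angle (r k : ℝ) (s : ℂ) :
    rayPow r (k * (2 * π / (m + 2))) s = rayPow r 0 s * omPow m (k * s) := by
  rw [rayPow, rayPow, omPow, ← Complex.exp_add]
  congr 1
  push_cast
  ring

theorem rayPow_zero_right_ofReal (r s : ℝ) : rayPow r 0 s = Real.exp (s * Real.log r) := by
  simp [rayPow]

theorem omPow_mul_half (k : ℂ) : omPow m (k * (((m : ℂ) + 2) / 2)) = Complex.exp (k * (π * I)) := by
  have hm : (m : ℂ) + 2 ≠ 0 := by exact_mod_cast (m + 1).succ_ne_zero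
  rw [omPow]
  congr 1
  field_simp

theorem omPow_one : omPow m 1 = om m := by
  rw [omPow, om, mul_one]

theorem omPow_neg_one : omPow m (-1) = (om m)⁻¹ := by
  rw [omPow, om, mul_neg_one, Complex.exp_neg]

theorem tendsto_exp_neg_mul_rayPow_atTop {c s : ℝ} (hc : 0 < c) (hs : 0 < s) :
    Tendsto (fun r : ℝ => Complex.exp (-c * rayPow r 0 s)) atTop (𝓝 0) := by
  have hgrow : Tendsto (fun r : ℝ => Real.exp (s * Real.log r)) atTop atTop :=
    Real.tendsto_exp_atTop.comp (Real.tendsto_log_atTop.const_mul_atTop hs)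
  have hreal := Real.tendsto_exp_atBot.comp (hgrow.const_mul_atTop_of_neg (neg_lt_zero.2 hc))
  convert (Complex.continuous_ofReal.tendsto 0).comp hreal using 1
  · ext r
    simp [rayPow_zero_right_ofReal]
  · simp

theorem SibAsympSp.tendsto_ofReal (h : SibAsympSp m Φ) :
    Tendsto (fun r : ℝ => Φ r * rayPow r 0 ((m : ℂ) / 4) *
      Complex.exp ((2 / ((m : ℂ) + 2)) * rayPow r 0 (((m : ℂ) + 2) / 2))) atTop (𝓝 1) := by
  simpa only [rayPt_zero_right] using h 0 (by rw [abs_zero]; positivity)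

theorem SibAsympSp.ne_zero (h : SibAsympSp m Φ) : Φ ≠ 0 := by
  rintro rfl
  have hzero : Tendsto (fun r : ℝ => (0 : ℂ → ℂ) r * rayPow r 0 ((m : ℂ) / 4) *
      Complex.exp ((2 / ((m : ℂ) + 2)) * rayPow r 0 (((m : ℂ) + 2) / 2))) atTop (𝓝 0) := by
    simp
  exact one_ne_zero (tendsto_nhds_unique h.tendsto_ofReal hzero)

theorem SibAsympSp.tendsto_mul_decayWeight (h : SibAsympSp m Φ) :
    Tendsto (fun r : ℝ => Φ r * decayWeight m r) atTop (𝓝 0) := by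
  have hdecay := tendsto_exp_neg_mul_rayPow_atTop (c := 4 / ((m : ℝ) + 2))
    (s := ((m : ℝ) + 2) / 2) (by positivity) (by positivity)
  convert h.tendsto_ofReal.mul hdecay using 1
  · ext r
    simp only [decayWeight, mul_assoc, ← Complex.exp_add]
    push_cast
    ring_nf
  · rw [mul_zero]

theorem SibAsympSp.tendsto_rotate_mul_decayWeight (h : SibAsympSp m Φ) {k : ℝ} (hk : |k| < 3 / 2)
    (hodd : omPow m (k * (((m : ℂ) + 2) / 2)) = -1) :
    Tendsto (fun r : ℝ => omPow m (k * ((m : ℂ) / 4)) * Φ (omPow m k * r) * decayWeight m r)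
      atTop (𝓝 1) := by
  have hθ : |k * (2 * π / (m + 2))| < 3 * π / (m + 2) := by
    rw [abs_mul, abs_of_pos (by positivity : 0 < 2 * π / (m + 2))]
    calc |k| * (2 * π / (m + 2)) < 3 / 2 * (2 * π / (m + 2)) := by gcongr
      _ = 3 * π / (m + 2) := by ring
  convert h _ hθ using 2 with r
  rw [rayPt_mul_angle, rayPow_mul_angle, rayPow_mul_angle, hodd, decayWeight]
  ring_nf

theorem SibAsympSp.tendsto_om_mul (h : SibAsympSp m Φ) :
    Tendsto (fun r : ℝ => omPow m ((m : ℂ) / 4) * Φ (om m * r) * decayWeight m r)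
      atTop (𝓝 1) := by
  convert h.tendsto_rotate_mul_decayWeight (k := 1) (by norm_num)
    (by rw [Complex.ofReal_one, omPow_mul_half, one_mul, Complex.exp_pi_mul_I]) using 4
  · rw [Complex.ofReal_one, one_mul]
  · rw [Complex.ofReal_one, omPow_one]

theorem SibAsympSp.tendsto_om_inv_mul (h : SibAsympSp m Φ) :
    Tendsto (fun r : ℝ => omPow m (-((m : ℂ) / 4)) * Φ ((om m)⁻¹ * r) * decayWeight m r)
      atTop (𝓝 1) := by
  convert h.tendsto_rotate_mul_decayWeight (k := -1) (by norm_num)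
    (by rw [Complex.ofReal_neg, Complex.ofReal_one, omPow_mul_half, neg_one_mul,
      Complex.exp_neg_pi_mul_I]) using 4
  · rw [Complex.ofReal_neg, Complex.ofReal_one, neg_one_mul]
  · rw [Complex.ofReal_neg, Complex.ofReal_one, omPow_neg_one]

end Sibuya

theorem schrodingerSolutions.exists_eq_smul_add_of_tendsto {V f g h : ℂ → ℂ} {G : ℝ → ℂ}
    (hV : Continuous V) (hf : f ∈ schrodingerSolutions V) (hg : g ∈ schrodingerSolutions V)
    (hh : h ∈ schrodingerSolutions V) (hf0 : f ≠ 0)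
    (hfG : Tendsto (fun r : ℝ => f r * G r) atTop (𝓝 0))
    (hgG : Tendsto (fun r : ℝ => g r * G r) atTop (𝓝 1))
    (hhG : Tendsto (fun r : ℝ => h r * G r) atTop (𝓝 1)) : ∃ c : ℂ, h = c • f + g := by
  obtain ⟨a, b, hab⟩ :=
    exists_eq_smul_add_smul hV hf hg hh (linearIndependent_of_tendsto hf0 hfG hgG)
  obtain rfl := coeff_eq_of_tendsto hfG hgG hhG hab
  exact ⟨a, by rw [hab, one_smul]⟩

theorem differentiable_of_forall_mul_eq {𝕜 ι : Type*} [NontriviallyNormedField 𝕜]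
    {C : 𝕜 → 𝕜} {F G : ι → 𝕜 → 𝕜}
    (hF : ∀ i, Differentiable 𝕜 (F i)) (hG : ∀ i, Differentiable 𝕜 (G i))
    (hne : ∀ z, ∃ i, F i z ≠ 0) (h : ∀ i z, C z * F i z = G i z) : Differentiable 𝕜 C := by
  intro z
  obtain ⟨i, hi⟩ := hne z
  have hev : C =ᶠ[𝓝 z] fun w => G i w / F i w := by
    filter_upwards [(hF i).continuous.continuousAt.eventually_ne hi] with w hw
    rw [eq_div_iff hw, h]
  exact hev.differentiableAt_iff.2 ((hG i z).div (hF i z) hi)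

theorem stmt3_general (m : ℕ)
    (Φ₀ : ℂ × ℂ → ℂ)
    (hent : Differentiable ℂ Φ₀)
    (hode : ∀ lam : ℂ, ∀ X : ℂ,
      -(deriv (deriv fun Y => Φ₀ (Y, lam)) X) + (X ^ m + lam) * Φ₀ (X, lam) = 0)
    (hasym : ∀ lam : ℂ, SibAsympSp m fun X => Φ₀ (X, lam)) :
    ∃ C : ℂ → ℂ,
      (∀ X lam : ℂ,
        omPow m ((m : ℂ) / 4) * Φ₀ (om m * X, om m ^ (-2 : ℤ) * lam) =
          C lam * Φ₀ (X, lam) +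
            omPow m (-((m : ℂ) / 4)) * Φ₀ ((om m)⁻¹ * X, om m ^ 2 * lam)) ∧
      (∀ C' : ℂ → ℂ,
        (∀ X lam : ℂ,
          omPow m ((m : ℂ) / 4) * Φ₀ (om m * X, om m ^ (-2 : ℤ) * lam) =
            C' lam * Φ₀ (X, lam) +
              omPow m (-((m : ℂ) / 4)) * Φ₀ ((om m)⁻¹ * X, om m ^ 2 * lam)) → C' = C) ∧
      Differentiable ℂ C ∧
      (∀ lam : ℂ,
        C lam * Φ₀ (0, lam) =
          omPow m ((m : ℂ) / 4) * Φ₀ (0, om m ^ (-2 : ℤ) * lam) -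
            omPow m (-((m : ℂ) / 4)) * Φ₀ (0, om m ^ 2 * lam)) := by
  have hω : om m ^ 2 ≠ 0 := pow_ne_zero 2 (Complex.exp_ne_zero _)
  have hsol : ∀ lam, (fun X => Φ₀ (X, lam)) ∈ schrodingerSolutions (fun X => X ^ m + lam) :=
    fun lam => ⟨hent.comp (differentiable_id.prodMk (differentiable_const lam)),
      fun X => by linear_combination -(hode lam X)⟩
  have hconn : ∀ lam, ∃ c : ℂ,
      (fun X => omPow m ((m : ℂ) / 4) * Φ₀ (om m * X, om m ^ (-2 : ℤ) * lam)) =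
        c • (fun X => Φ₀ (X, lam)) +
          fun X => omPow m (-((m : ℂ) / 4)) * Φ₀ ((om m)⁻¹ * X, om m ^ 2 * lam) := fun lam =>
    schrodingerSolutions.exists_eq_smul_add_of_tendsto (by fun_prop) (hsol lam)
      (schrodingerSolutions.comp_const_mul_mem_of_pow_eq_one (hsol _) _
        (by rw [inv_pow, om_pow_add_two, inv_one]) (by rw [inv_pow, inv_mul_cancel_left₀ hω]))
      (schrodingerSolutions.comp_const_mul_mem_of_pow_eq_one (hsol _) _ (om_pow_add_two m)
        (by rw [zpow_neg, zpow_ofNat, mul_inv_cancel_left₀ hω]))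
      (hasym lam).ne_zero (hasym lam).tendsto_mul_decayWeight (hasym _).tendsto_om_inv_mul
      (hasym _).tendsto_om_mul
  choose C hC using hconn
  simp only [funext_iff, Pi.add_apply, Pi.smul_apply, smul_eq_mul] at hC
  have hCX := fun X lam => hC lam X
  refine ⟨C, hCX, fun C' hC' => funext fun lam => ?_, ?_, fun lam => ?_⟩
  · exact smul_left_injective ℂ (hasym lam).ne_zero
      (funext fun X => add_right_cancel ((hC' X lam).symm.trans (hCX X lam)))
  · refine differentiable_of_forall_mul_eq (F := fun X lam => Φ₀ (X, lam)) (fun X => ?_)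
      (fun X => ?_) (fun lam => Function.ne_iff.1 (hasym lam).ne_zero)
      fun X lam => eq_sub_of_add_eq (hCX X lam).symm
    all_goals fun_prop
  · simpa only [mul_zero] using eq_sub_of_add_eq (hCX 0 lam).symm

/-- with `Φ₁(X,λ) := ω^{-m/4} Φ₀(ω⁻¹X, ω²λ)` and
`Φ₋₁(X,λ) := ω^{m/4} Φ₀(ωX, ω⁻²λ)`, there is a unique `C : ℂ → ℂ` with
`Φ₋₁ = C(λ)Φ₀ + Φ₁`; it is entire and satisfies
`C(λ) f₀(λ) = ω^{m/4} f₀(ω⁻²λ) - ω^{-m/4} f₀(ω²λ)` where `f₀(λ) = Φ₀(0,λ)`. -/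
theorem stmt3 (m : ℕ) (hm : 3 ≤ m)
    (Φ₀ : ℂ × ℂ → ℂ)
    (hent : Differentiable ℂ Φ₀)
    (hode : ∀ lam : ℂ, ∀ X : ℂ,
      -(deriv (deriv fun Y => Φ₀ (Y, lam)) X) + (X ^ m + lam) * Φ₀ (X, lam) = 0)
    (hasym : ∀ lam : ℂ, SibAsympSp m fun X => Φ₀ (X, lam)) :
    ∃ C : ℂ → ℂ,
      (∀ X lam : ℂ,
        omPow m ((m : ℂ) / 4) * Φ₀ (om m * X, om m ^ (-2 : ℤ) * lam) =
          C lam * Φ₀ (X, lam) +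
            omPow m (-((m : ℂ) / 4)) * Φ₀ ((om m)⁻¹ * X, om m ^ 2 * lam)) ∧
      (∀ C' : ℂ → ℂ,
        (∀ X lam : ℂ,
          omPow m ((m : ℂ) / 4) * Φ₀ (om m * X, om m ^ (-2 : ℤ) * lam) =
            C' lam * Φ₀ (X, lam) +
              omPow m (-((m : ℂ) / 4)) * Φ₀ ((om m)⁻¹ * X, om m ^ 2 * lam)) → C' = C) ∧
      Differentiable ℂ C ∧
      (∀ lam : ℂ,
        C lam * Φ₀ (0, lam) =
          omPow m ((m : ℂ) / 4) * Φ₀ (0, om m ^ (-2 : ℤ) * lam) -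
            omPow m (-((m : ℂ) / 4)) * Φ₀ (0, om m ^ 2 * lam)) :=
  stmt3_general m Φ₀ hent hode hasym
end
end

section
/- Green's transform on a segment: conj(w(z₂)) w'(z₂) − conj(w(z₁)) w'(z₁) = e^{−iθ} ∫₀^r |w'(z(t))|² dt + e^{iθ} ∫₀^r f(z(t)) |w(z(t))|² dt. -/
/-!
Along the segment `z(t) = z₁ + t e^{iθ}`, the function `F(t) = conj(w(z(t))) w'(z(t))` has
derivative `e^{-iθ} |w'(z(t))|² + e^{iθ} conj(w(z(t))) w''(z(t))`, and the equation `w'' = f w`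
turns the second term into `e^{iθ} f(z(t)) |w(z(t))|²`. The identity is the fundamental theorem
of calculus for `F` on `[0, r]`.
-/

open Complex ComplexConjugate Set

theorem hasDerivAt_conj_mul_deriv_comp {w : ℂ → ℂ} {γ : ℝ → ℂ} {γ' : ℂ} {t : ℝ}
    (hγ : HasDerivAt γ γ' t) (hw : DifferentiableAt ℂ w (γ t))
    (hw' : DifferentiableAt ℂ (deriv w) (γ t)) :
    HasDerivAt (fun s => conj (w (γ s)) * deriv w (γ s))
      (conj γ' * (‖deriv w (γ t)‖ : ℂ) ^ 2 + γ' * (conj (w (γ t)) * deriv (deriv w) (γ t))) t := by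
  have h₁ : HasDerivAt (fun s => w (γ s)) (deriv w (γ t) * γ') t := hw.hasDerivAt.comp t hγ
  have h₂ : HasDerivAt (fun s => deriv w (γ s)) (deriv (deriv w) (γ t) * γ') t :=
    hw'.hasDerivAt.comp t hγ
  refine (h₁.star.mul h₂).congr_deriv ?_
  rw [← conj_mul']
  simp only [star_mul', starRingEnd_apply]
  ring

theorem conj_mul_deriv_sub_eq_integral {w : ℂ → ℂ} {U : Set ℂ} (hU : IsOpen U)
    (hw : DifferentiableOn ℂ w U) {z₁ e : ℂ} {r : ℝ}
    (hseg : MapsTo (fun t : ℝ => z₁ + t * e) (uIcc 0 r) U) :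
    conj (w (z₁ + r * e)) * deriv w (z₁ + r * e) - conj (w z₁) * deriv w z₁ =
      conj e * (∫ t in (0 : ℝ)..r, (‖deriv w (z₁ + t * e)‖ : ℂ) ^ 2) +
        e * ∫ t in (0 : ℝ)..r, conj (w (z₁ + t * e)) * deriv (deriv w) (z₁ + t * e) := by
  have hw₀ : AnalyticOnNhd ℂ w U := hw.analyticOnNhd hU
  have hw₁ : AnalyticOnNhd ℂ (deriv w) U := hw₀.deriv
  have hw₂ : AnalyticOnNhd ℂ (deriv (deriv w)) U := hw₁.deriv
  have hline : Continuous fun t : ℝ => z₁ + t * e := by fun_prop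
  have hline' (t : ℝ) : HasDerivAt (fun t : ℝ => z₁ + t * e) e t := by
    simpa using ((hasDerivAt_id t).ofReal_comp.mul_const e).const_add z₁
  have hint₁ : IntervalIntegrable (fun t : ℝ => (‖deriv w (z₁ + t * e)‖ : ℂ) ^ 2)
      MeasureTheory.volume 0 r :=
    ((continuous_ofReal.comp_continuousOn
      (hw₁.continuousOn.comp hline.continuousOn hseg).norm).pow 2).intervalIntegrable
  have hint₂ : IntervalIntegrable
      (fun t : ℝ => conj (w (z₁ + t * e)) * deriv (deriv w) (z₁ + t * e))
      MeasureTheory.volume 0 r :=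
    ((continuous_conj.comp_continuousOn (hw₀.continuousOn.comp hline.continuousOn hseg)).mul
      (hw₂.continuousOn.comp hline.continuousOn hseg)).intervalIntegrable
  rw [← intervalIntegral.integral_const_mul, ← intervalIntegral.integral_const_mul,
    ← intervalIntegral.integral_add (hint₁.const_mul _) (hint₂.const_mul _),
    intervalIntegral.integral_eq_sub_of_hasDerivAt
      (fun t ht => hasDerivAt_conj_mul_deriv_comp (hline' t) (hw₀ _ (hseg ht)).differentiableAt
        (hw₁ _ (hseg ht)).differentiableAt)
      ((hint₁.const_mul _).add (hint₂.const_mul _))]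
  simp

theorem stmt12_general (z₁ z₂ : ℂ)
    (r : ℝ) (hr : r = ‖z₂ - z₁‖)
    (θ : ℝ) (hθ : Complex.exp (θ * Complex.I) = (z₂ - z₁) / (r : ℂ))
    (f w : ℂ → ℂ)
    (U : Set ℂ) (hU : IsOpen U)
    (hsub : (fun t : ℝ => z₁ + (t : ℂ) * Complex.exp (θ * Complex.I)) '' Set.Icc 0 r ⊆ U)
    (hw : DifferentiableOn ℂ w U)
    (hode : ∀ z ∈ (fun t : ℝ => z₁ + (t : ℂ) * Complex.exp (θ * Complex.I)) '' Set.Icc 0 r,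
      deriv (deriv w) z = f z * w z) :
    (starRingEnd ℂ) (w z₂) * deriv w z₂ - (starRingEnd ℂ) (w z₁) * deriv w z₁ =
      Complex.exp (-(θ : ℂ) * Complex.I) *
        (∫ t in (0 : ℝ)..r,
          ((‖deriv w (z₁ + (t : ℂ) * Complex.exp (θ * Complex.I))‖ : ℂ)) ^ 2) +
      Complex.exp ((θ : ℂ) * Complex.I) *
        (∫ t in (0 : ℝ)..r,
          f (z₁ + (t : ℂ) * Complex.exp (θ * Complex.I)) *
            ((‖w (z₁ + (t : ℂ) * Complex.exp (θ * Complex.I))‖ : ℂ)) ^ 2) := by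
  have hIcc : uIcc 0 r = Icc 0 r := uIcc_of_le (hr ▸ norm_nonneg _)
  have hr₀ : (r : ℂ) ≠ 0 := fun h => exp_ne_zero _ (by rw [hθ, h, div_zero])
  have hend : z₁ + r * exp (θ * I) = z₂ := by rw [hθ]; field_simp; ring
  have hconj : conj (exp (θ * I)) = exp (-θ * I) := by rw [← exp_conj]; simp
  have green := conj_mul_deriv_sub_eq_integral hU hw (hIcc ▸ fun t ht => hsub ⟨t, ht, rfl⟩)
  rw [hend, hconj] at green
  rw [green]
  congr 2
  refine intervalIntegral.integral_congr fun t ht => ?_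
  rw [hode _ ⟨t, hIcc ▸ ht, rfl⟩, ← conj_mul']
  ring

/-- Green's transform on a segment. If `w'' = f·w` holds along the
segment from `z₁` to `z₂`, parametrized by `z(t) = z₁ + t e^{iθ}`, `t ∈ [0, r]`,
`r = |z₂ - z₁|`, then
`conj(w(z₂))w'(z₂) - conj(w(z₁))w'(z₁)
  = e^{-iθ} ∫₀^r |w'(z(t))|² dt + e^{iθ} ∫₀^r f(z(t)) |w(z(t))|² dt`. -/
theorem stmt12 (z₁ z₂ : ℂ) (hz : z₁ ≠ z₂)
    (r : ℝ) (hr : r = ‖z₂ - z₁‖)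
    (θ : ℝ) (hθ : Complex.exp (θ * Complex.I) = (z₂ - z₁) / (r : ℂ))
    (f w : ℂ → ℂ)
    (hf : ContinuousOn f
      ((fun t : ℝ => z₁ + (t : ℂ) * Complex.exp (θ * Complex.I)) '' Set.Icc 0 r))
    (U : Set ℂ) (hU : IsOpen U)
    (hsub : (fun t : ℝ => z₁ + (t : ℂ) * Complex.exp (θ * Complex.I)) '' Set.Icc 0 r ⊆ U)
    (hw : DifferentiableOn ℂ w U)
    (hode : ∀ z ∈ (fun t : ℝ => z₁ + (t : ℂ) * Complex.exp (θ * Complex.I)) '' Set.Icc 0 r,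
      deriv (deriv w) z = f z * w z) :
    (starRingEnd ℂ) (w z₂) * deriv w z₂ - (starRingEnd ℂ) (w z₁) * deriv w z₁ =
      Complex.exp (-(θ : ℂ) * Complex.I) *
        (∫ t in (0 : ℝ)..r,
          ((‖deriv w (z₁ + (t : ℂ) * Complex.exp (θ * Complex.I))‖ : ℂ)) ^ 2) +
      Complex.exp ((θ : ℂ) * Complex.I) *
        (∫ t in (0 : ℝ)..r,
          f (z₁ + (t : ℂ) * Complex.exp (θ * Complex.I)) *
            ((‖w (z₁ + (t : ℂ) * Complex.exp (θ * Complex.I))‖ : ℂ)) ^ 2) :=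
  stmt12_general z₁ z₂ r hr θ hθ f w U hU hsub hw hode
end

section
/- The function t ↦ w(t) w'(t) is strictly increasing on [0, ∞) and satisfies w(t) w'(t) < 0 for every t ≥ 0; consequently w(t) ≠ 0 and w'(t) ≠ 0 for every t ≥ 0. -/
/-!
Along a solution of `w'' = q w` with `q > 0` we have `(w w')' = w'² + q w² ≥ 0`, and equality at
a point would make `w` and `w'` vanish together there, which by uniqueness for the linear ODE
forces `w ≡ 0`. Hence `w w'` is strictly increasing, and since it tends to `0` at infinity it is
negative everywhere.
-/

open Set Filter

section LinearODE2

variable {q w w' : ℝ → ℝ}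

theorem linearODE2_eqOn_zero_Icc {a b t₀ : ℝ} (hq : ContinuousOn q (Icc a b))
    (hw : ∀ t ∈ Icc a b, HasDerivWithinAt w (w' t) (Icc a b) t)
    (hw' : ∀ t ∈ Icc a b, HasDerivWithinAt w' (q t * w t) (Icc a b) t)
    (ht₀ : t₀ ∈ Icc a b) (h0 : w t₀ = 0) (h0' : w' t₀ = 0) : EqOn w 0 (Icc a b) := by
  obtain ⟨C, hC⟩ := isCompact_Icc.exists_bound_of_continuousOn hq
  set v : ℝ → ℝ × ℝ → ℝ × ℝ := fun t p => (p.2, q t * p.1)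
  set f : ℝ → ℝ × ℝ := fun t => (w t, w' t)
  have hv : ∀ t ∈ Icc a b, LipschitzOnWith (max 1 C.toNNReal) (v t) univ := fun t ht =>
    (LipschitzWith.prod_snd.prodMk ((lipschitzWith_smul (q t)).comp LipschitzWith.prod_fst)
      |>.weaken (max_le_max le_rfl (by simpa using NNReal.le_toNNReal_of_coe_le (hC t ht)))
      ).lipschitzOnWith
  have hf : ∀ t ∈ Icc a b, HasDerivWithinAt f (v t (f t)) (Icc a b) t := fun t ht =>
    (hw t ht).prodMk (hw' t ht)
  have hzero : ∀ t ∈ Icc a b, HasDerivWithinAt (fun _ => 0) (v t 0) (Icc a b) t := fun t _ =>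
    (hasDerivWithinAt_const t (Icc a b) (0 : ℝ × ℝ)).congr_deriv (by simp [v, Prod.zero_eq_mk])
  have hfc : ContinuousOn f (Icc a b) := fun t ht => (hf t ht).continuousWithinAt
  have hft₀ : f t₀ = 0 := by simp [f, h0, h0']
  have hleft_mem : ∀ t ∈ Ioc a t₀, t ∈ Ioc a b := fun t ht => ⟨ht.1, ht.2.trans ht₀.2⟩
  have hright_mem : ∀ t ∈ Ico t₀ b, t ∈ Ico a b := fun t ht =>
    ⟨ht₀.1.trans ht.1, ht.2⟩
  have hleft : EqOn f (fun _ => 0) (Icc a t₀) :=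
    ODE_solution_unique_of_mem_Icc_left (s := fun _ => univ)
      (fun t ht => hv t (Ioc_subset_Icc_self (hleft_mem t ht)))
      (hfc.mono (Icc_subset_Icc_right ht₀.2))
      (fun t ht => (hf t (Ioc_subset_Icc_self (hleft_mem t ht))).mono_of_mem_nhdsWithin
        (Icc_mem_nhdsLE_of_mem (hleft_mem t ht)))
      (fun _ _ => mem_univ _) continuousOn_const
      (fun t ht => (hzero t (Ioc_subset_Icc_self (hleft_mem t ht))).mono_of_mem_nhdsWithin
        (Icc_mem_nhdsLE_of_mem (hleft_mem t ht)))
      (fun _ _ => mem_univ _) hft₀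
  have hright : EqOn f (fun _ => 0) (Icc t₀ b) :=
    ODE_solution_unique_of_mem_Icc_right (s := fun _ => univ)
      (fun t ht => hv t (Ico_subset_Icc_self (hright_mem t ht)))
      (hfc.mono (Icc_subset_Icc_left ht₀.1))
      (fun t ht => (hf t (Ico_subset_Icc_self (hright_mem t ht))).mono_of_mem_nhdsWithin
        (Icc_mem_nhdsGE_of_mem (hright_mem t ht)))
      (fun _ _ => mem_univ _) continuousOn_const
      (fun t ht => (hzero t (Ico_subset_Icc_self (hright_mem t ht))).mono_of_mem_nhdsWithin
        (Icc_mem_nhdsGE_of_mem (hright_mem t ht)))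
      (fun _ _ => mem_univ _) hft₀
  intro t ht
  rw [← Icc_union_Icc_eq_Icc ht₀.1 ht₀.2] at ht
  exact congrArg Prod.fst ((hleft.union hright) ht)

theorem linearODE2_eqOn_zero_Ici {a t₀ : ℝ} (hq : ContinuousOn q (Ici a))
    (hw : ∀ t ∈ Ici a, HasDerivWithinAt w (w' t) (Ici a) t)
    (hw' : ∀ t ∈ Ici a, HasDerivWithinAt w' (q t * w t) (Ici a) t)
    (ht₀ : t₀ ∈ Ici a) (h0 : w t₀ = 0) (h0' : w' t₀ = 0) : EqOn w 0 (Ici a) := fun s hs =>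
  have hsub : Icc a (max s t₀) ⊆ Ici a := Icc_subset_Ici_self
  linearODE2_eqOn_zero_Icc (hq.mono hsub) (fun t ht => (hw t (hsub ht)).mono hsub)
    (fun t ht => (hw' t (hsub ht)).mono hsub) ⟨ht₀, le_max_right _ _⟩ h0 h0'
    ⟨hs, le_max_left _ _⟩

theorem strictMonoOn_mul_deriv_of_linearODE2 {a : ℝ} (hq : ContinuousOn q (Ici a))
    (hq_pos : ∀ t ∈ Ioi a, 0 < q t)
    (hw : ∀ t ∈ Ici a, HasDerivWithinAt w (w' t) (Ici a) t)
    (hw' : ∀ t ∈ Ici a, HasDerivWithinAt w' (q t * w t) (Ici a) t)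
    (hne : ∃ t ∈ Ici a, w t ≠ 0) : StrictMonoOn (fun t => w t * w' t) (Ici a) := by
  have hnz : ∀ t ∈ Ici a, w t ≠ 0 ∨ w' t ≠ 0 := by
    intro t ht
    by_contra! h
    obtain ⟨s, hs, hws⟩ := hne
    exact hws (linearODE2_eqOn_zero_Ici hq hw hw' ht h.1 h.2 hs)
  refine strictMonoOn_of_deriv_pos (convex_Ici a)
    (fun t ht => (hw t ht).continuousWithinAt.mul (hw' t ht).continuousWithinAt) fun x hx => ?_
  rw [interior_Ici] at hx
  have hx' : x ∈ Ici a := mem_Ici.2 (mem_Ioi.1 hx).le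
  have hderiv : HasDerivAt (fun t => w t * w' t) (w' x * w' x + w x * (q x * w x)) x :=
    ((hw x hx').hasDerivAt (Ici_mem_nhds hx)).mul ((hw' x hx').hasDerivAt (Ici_mem_nhds hx))
  rw [hderiv.deriv]
  have hqx := hq_pos x hx
  rcases hnz x hx' with h | h
  · nlinarith [mul_pos hqx (mul_self_pos.2 h), mul_self_nonneg (w' x)]
  · nlinarith [mul_self_pos.2 h, mul_nonneg hqx.le (mul_self_nonneg (w x))]

end LinearODE2

theorem StrictMonoOn.lt_of_tendsto_atTop {α β : Type*} [LinearOrder α] [NoMaxOrder α]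
    [TopologicalSpace β] [Preorder β] [ClosedIciTopology β] {f : α → β} {a t : α} {l : β}
    (hf : StrictMonoOn f (Ici a)) (hl : Tendsto f atTop (nhds l)) (ht : t ∈ Ici a) : f t < l := by
  have : Nonempty α := ⟨a⟩
  obtain ⟨s, hts⟩ := exists_gt t
  have hs : s ∈ Ici a := le_trans ht hts.le
  calc f t < f s := hf ht hs hts
    _ ≤ l := ge_of_tendsto hl <| (eventually_ge_atTop s).mono fun r hsr =>
      hf.monotoneOn hs (le_trans hs hsr) hsr

theorem stmt13_general (m : ℕ) (lam : ℝ) (hlam : 0 ≤ lam)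
    (w w' w'' : ℝ → ℝ)
    (hw : ∀ t ∈ Set.Ici (0 : ℝ), HasDerivWithinAt w (w' t) (Set.Ici 0) t)
    (hw' : ∀ t ∈ Set.Ici (0 : ℝ), HasDerivWithinAt w' (w'' t) (Set.Ici 0) t)
    (hne : ∃ t ∈ Set.Ici (0 : ℝ), w t ≠ 0)
    (hode : ∀ t ∈ Set.Ici (0 : ℝ), w'' t = (t ^ m + lam) * w t)
    (hlim : Filter.Tendsto (fun t => w t * w' t) Filter.atTop (nhds 0)) :
    StrictMonoOn (fun t => w t * w' t) (Set.Ici 0) ∧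
      ∀ t ∈ Set.Ici (0 : ℝ), w t * w' t < 0 ∧ w t ≠ 0 ∧ w' t ≠ 0 := by
  have hmono : StrictMonoOn (fun t => w t * w' t) (Ici 0) :=
    strictMonoOn_mul_deriv_of_linearODE2 (q := fun t => t ^ m + lam) (by fun_prop)
      (fun t ht => by have := pow_pos (mem_Ioi.1 ht) m; positivity) hw
      (fun t ht => hode t ht ▸ hw' t ht) hne
  refine ⟨hmono, fun t ht => ?_⟩
  have hneg : w t * w' t < 0 := hmono.lt_of_tendsto_atTop hlim ht
  exact ⟨hneg, left_ne_zero_of_mul hneg.ne, right_ne_zero_of_mul hneg.ne⟩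

/-- if `w : [0,∞) → ℝ` is twice continuously differentiable, not
identically zero, satisfies `w'' = (t^m + λ)w` with `λ ≥ 0`, and `w w' → 0` at `+∞`,
then `t ↦ w(t)w'(t)` is strictly increasing on `[0,∞)`, `w(t)w'(t) < 0` for all
`t ≥ 0`, and consequently `w(t) ≠ 0` and `w'(t) ≠ 0` for all `t ≥ 0`. -/
theorem stmt13 (m : ℕ) (hm : 1 ≤ m) (lam : ℝ) (hlam : 0 ≤ lam)
    (w w' w'' : ℝ → ℝ)
    (hw : ∀ t ∈ Set.Ici (0 : ℝ), HasDerivWithinAt w (w' t) (Set.Ici 0) t)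
    (hw' : ∀ t ∈ Set.Ici (0 : ℝ), HasDerivWithinAt w' (w'' t) (Set.Ici 0) t)
    (hw'' : ContinuousOn w'' (Set.Ici 0))
    (hne : ∃ t ∈ Set.Ici (0 : ℝ), w t ≠ 0)
    (hode : ∀ t ∈ Set.Ici (0 : ℝ), w'' t = (t ^ m + lam) * w t)
    (hlim : Filter.Tendsto (fun t => w t * w' t) Filter.atTop (nhds 0)) :
    StrictMonoOn (fun t => w t * w' t) (Set.Ici 0) ∧
      ∀ t ∈ Set.Ici (0 : ℝ), w t * w' t < 0 ∧ w t ≠ 0 ∧ w' t ≠ 0 :=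
  stmt13_general m lam hlam w w' w'' hw hw' hne hode hlim
end

section
/- The number λ is real and negative: λ ∈ ℝ and λ < 0. -/
/-!
Green's identity on the half-line: integrating `(conj w · w')' = |w'|² + (t^m + λ)|w|²` over
`(0, ∞)`, the boundary terms vanish because `w(0) = 0` and `conj w · w' → 0`, so
`∫ (|w'|² + t^m |w|²) + λ ∫ |w|² = 0`. Both integrals are positive since `w` is continuous and
nonzero at some `t₀ > 0`, hence `λ` is a negative real number.
-/

open Set Filter MeasureTheory ComplexConjugate Topology

theorem setIntegral_pos_of_continuousOn_of_nonneg {X : Type*} [TopologicalSpace X]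
    [MeasurableSpace X] [OpensMeasurableSpace X] {μ : Measure X} [μ.IsOpenPosMeasure]
    {f : X → ℝ} {U : Set X} {x₀ : X} (hU : IsOpen U) (hf : ContinuousOn f U)
    (hfi : IntegrableOn f U μ) (hf_nonneg : ∀ x ∈ U, 0 ≤ f x) (hx₀ : x₀ ∈ U) (hfx₀ : f x₀ ≠ 0) :
    0 < ∫ x in U, f x ∂μ := by
  rw [setIntegral_pos_iff_support_of_nonneg_ae
    ((ae_restrict_iff' hU.measurableSet).mpr (ae_of_all _ hf_nonneg)) hfi]
  refine (IsOpen.measure_pos μ (hf.isOpen_inter_preimage hU isOpen_compl_singleton)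
    ⟨x₀, hx₀, hfx₀⟩).trans_le (measure_mono ?_)
  exact fun x ⟨hxU, hfx⟩ => ⟨hfx, hxU⟩

theorem hasDerivAt_conj_mul_deriv {u u' : ℝ → ℂ} {u'' : ℂ} {t : ℝ}
    (hu : HasDerivAt u (u' t) t) (hu' : HasDerivAt u' u'' t) :
    HasDerivAt (fun s => conj (u s) * u' s) (((‖u' t‖ ^ 2 : ℝ) : ℂ) + conj (u t) * u'') t := by
  rw [Complex.ofReal_pow, ← Complex.conj_mul']
  exact hu.star.mul hu'

theorem integral_Ioi_norm_sq_deriv_add_conj_mul_deriv2 {a : ℝ} {u u' u'' : ℝ → ℂ}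
    (hu : ∀ t ∈ Ici a, HasDerivWithinAt u (u' t) (Ici a) t)
    (hu' : ∀ t ∈ Ici a, HasDerivWithinAt u' (u'' t) (Ici a) t)
    (hint : IntegrableOn (fun t => ((‖u' t‖ ^ 2 : ℝ) : ℂ) + conj (u t) * u'' t) (Ioi a))
    (hlim : Tendsto (fun t => conj (u t) * u' t) atTop (𝓝 0)) :
    ∫ t in Ioi a, ((‖u' t‖ ^ 2 : ℝ) : ℂ) + conj (u t) * u'' t = -(conj (u a) * u' a) := by
  have hcont : ContinuousWithinAt (fun t => conj (u t) * u' t) (Ici a) a :=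
    ((hu a self_mem_Ici).continuousWithinAt.star).mul (hu' a self_mem_Ici).continuousWithinAt
  rw [integral_Ioi_of_hasDerivAt_of_tendsto hcont (fun t ht => ?_) hint hlim, zero_sub]
  exact hasDerivAt_conj_mul_deriv ((hu t (Ioi_subset_Ici_self ht)).hasDerivAt (Ici_mem_nhds ht))
    ((hu' t (Ioi_subset_Ici_self ht)).hasDerivAt (Ici_mem_nhds ht))

theorem im_eq_zero_and_re_neg_of_add_mul_eq_zero {a c : ℝ} {z : ℂ} (ha : 0 < a) (hc : 0 < c)
    (h : (a : ℂ) + z * c = 0) : z.im = 0 ∧ z.re < 0 := by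
  have him := congrArg Complex.im h
  have hre := congrArg Complex.re h
  simp only [Complex.add_im, Complex.ofReal_im, Complex.mul_im, Complex.ofReal_re, mul_zero,
    zero_add, Complex.zero_im, Complex.add_re, Complex.mul_re, sub_zero,
    Complex.zero_re] at him hre
  exact ⟨(mul_eq_zero.mp him).resolve_right hc.ne', by nlinarith⟩

theorem integral_energy_add_mul_integral_norm_sq_eq_zero {m : ℕ} {lam : ℂ} {w w' w'' : ℝ → ℂ}
    (hw : ∀ t ∈ Ici (0 : ℝ), HasDerivWithinAt w (w' t) (Ici 0) t)
    (hw' : ∀ t ∈ Ici (0 : ℝ), HasDerivWithinAt w' (w'' t) (Ici 0) t) (h0 : w 0 = 0)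
    (hode : ∀ t ∈ Ici (0 : ℝ), w'' t = ((t : ℂ) ^ m + lam) * w t)
    (hE : IntegrableOn (fun t => ‖w' t‖ ^ 2 + t ^ m * ‖w t‖ ^ 2) (Ioi 0))
    (hN : IntegrableOn (fun t => ‖w t‖ ^ 2) (Ioi 0))
    (hlim : Tendsto (fun t => conj (w t) * w' t) atTop (𝓝 0)) :
    ((∫ t in Ioi 0, ‖w' t‖ ^ 2 + t ^ m * ‖w t‖ ^ 2 : ℝ) : ℂ)
      + lam * ((∫ t in Ioi 0, ‖w t‖ ^ 2 : ℝ) : ℂ) = 0 := by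
  have hintegrand : EqOn (fun t => ((‖w' t‖ ^ 2 : ℝ) : ℂ) + conj (w t) * w'' t)
      (fun t => ((‖w' t‖ ^ 2 + t ^ m * ‖w t‖ ^ 2 : ℝ) : ℂ) + lam * ((‖w t‖ ^ 2 : ℝ) : ℂ))
      (Ioi 0) := fun t ht => by
    simp only [hode t (Ioi_subset_Ici_self ht), Complex.ofReal_add, Complex.ofReal_mul,
      Complex.ofReal_pow, ← Complex.conj_mul']
    ring
  have hEc : IntegrableOn (fun t => ((‖w' t‖ ^ 2 + t ^ m * ‖w t‖ ^ 2 : ℝ) : ℂ)) (Ioi 0) :=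
    hE.ofReal
  have hNc : IntegrableOn (fun t => lam * ((‖w t‖ ^ 2 : ℝ) : ℂ)) (Ioi 0) :=
    hN.ofReal.const_mul lam
  have hgreen := integral_Ioi_norm_sq_deriv_add_conj_mul_deriv2 hw hw'
    (IntegrableOn.congr_fun (hEc.add hNc) hintegrand.symm measurableSet_Ioi) hlim
  rwa [setIntegral_congr_fun measurableSet_Ioi hintegrand, integral_add hEc hNc,
    integral_const_mul, integral_complex_ofReal, integral_complex_ofReal, h0, map_zero,
    zero_mul, neg_zero] at hgreen

theorem stmt14_general (m : ℕ) (lam : ℂ)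
    (w w' w'' : ℝ → ℂ)
    (hw : ∀ t ∈ Set.Ici (0 : ℝ), HasDerivWithinAt w (w' t) (Set.Ici 0) t)
    (hw' : ∀ t ∈ Set.Ici (0 : ℝ), HasDerivWithinAt w' (w'' t) (Set.Ici 0) t)
    (hne : ∃ t ∈ Set.Ici (0 : ℝ), w t ≠ 0)
    (h0 : w 0 = 0)
    (hode : ∀ t ∈ Set.Ici (0 : ℝ), w'' t = ((t : ℂ) ^ m + lam) * w t)
    (hi1 : MeasureTheory.IntegrableOn (fun t => ‖w t‖ ^ 2) (Set.Ici 0))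
    (hi2 : MeasureTheory.IntegrableOn (fun t => ‖w' t‖ ^ 2) (Set.Ici 0))
    (hi3 : MeasureTheory.IntegrableOn (fun t => t ^ m * ‖w t‖ ^ 2) (Set.Ici 0))
    (hlim : Filter.Tendsto (fun t => (starRingEnd ℂ) (w t) * w' t)
      Filter.atTop (nhds 0)) :
    lam.im = 0 ∧ lam.re < 0 := by
  have hwc : ContinuousOn w (Ici 0) := fun t ht => (hw t ht).continuousWithinAt
  have hw'c : ContinuousOn w' (Ici 0) := fun t ht => (hw' t ht).continuousWithinAt
  have hN : IntegrableOn (fun t => ‖w t‖ ^ 2) (Ioi 0) := hi1.mono_set Ioi_subset_Ici_self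
  have hE : IntegrableOn (fun t => ‖w' t‖ ^ 2 + t ^ m * ‖w t‖ ^ 2) (Ioi 0) :=
    (hi2.add hi3).mono_set Ioi_subset_Ici_self
  obtain ⟨t₀, ht₀, hwt₀⟩ := hne
  have ht₀pos : 0 < t₀ := ht₀.lt_of_ne fun h => hwt₀ (h ▸ h0)
  have hwt₀pos : 0 < ‖w t₀‖ := norm_pos_iff.mpr hwt₀
  refine im_eq_zero_and_re_neg_of_add_mul_eq_zero ?_ ?_
    (integral_energy_add_mul_integral_norm_sq_eq_zero hw hw' h0 hode hE hN hlim)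
  · refine setIntegral_pos_of_continuousOn_of_nonneg isOpen_Ioi ?_ hE
      (fun t (ht : 0 < t) => by positivity) ht₀pos (by positivity)
    exact ((hw'c.norm.pow 2).add ((continuousOn_pow m).mul (hwc.norm.pow 2))).mono
      Ioi_subset_Ici_self
  · exact setIntegral_pos_of_continuousOn_of_nonneg isOpen_Ioi
      ((hwc.norm.pow 2).mono Ioi_subset_Ici_self) hN (fun t _ => by positivity) ht₀pos
      (by positivity)

/-- if `w : [0,∞) → ℂ` is a twice continuously differentiable, not
identically zero solution of `w'' = (t^m + λ)w` with `w(0) = 0`, such that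
`∫₀^∞ |w|² < ∞`, `∫₀^∞ |w'|² < ∞`, `∫₀^∞ t^m |w|² < ∞` and
`conj(w)w' → 0` at `+∞`, then `λ` is real and negative. -/
theorem stmt14 (m : ℕ) (hm : 1 ≤ m) (lam : ℂ)
    (w w' w'' : ℝ → ℂ)
    (hw : ∀ t ∈ Set.Ici (0 : ℝ), HasDerivWithinAt w (w' t) (Set.Ici 0) t)
    (hw' : ∀ t ∈ Set.Ici (0 : ℝ), HasDerivWithinAt w' (w'' t) (Set.Ici 0) t)
    (hw'' : ContinuousOn w'' (Set.Ici 0))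
    (hne : ∃ t ∈ Set.Ici (0 : ℝ), w t ≠ 0)
    (h0 : w 0 = 0)
    (hode : ∀ t ∈ Set.Ici (0 : ℝ), w'' t = ((t : ℂ) ^ m + lam) * w t)
    (hi1 : MeasureTheory.IntegrableOn (fun t => ‖w t‖ ^ 2) (Set.Ici 0))
    (hi2 : MeasureTheory.IntegrableOn (fun t => ‖w' t‖ ^ 2) (Set.Ici 0))
    (hi3 : MeasureTheory.IntegrableOn (fun t => t ^ m * ‖w t‖ ^ 2) (Set.Ici 0))
    (hlim : Filter.Tendsto (fun t => (starRingEnd ℂ) (w t) * w' t)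
      Filter.atTop (nhds 0)) :
    lam.im = 0 ∧ lam.re < 0 :=
  stmt14_general m lam w w' w'' hw hw' hne h0 hode hi1 hi2 hi3 hlim
end

section
/- Im(λ) < 0. -/
/-!
Multiplying the equation `Y'' = V Y` by `conj Y` and integrating by parts over `(0, ∞)` (the
boundary terms vanish because `Y 0 = 0` and `conj Y * Y' → 0`) gives
`D + I₄ + a₁ω I₃ + a₂ω² I₂ + a₃ω³ I₁ + λω⁴ I₀ = 0` with `D = ∫ |Y'|²` and the moments
`Iₖ = ∫ tᵏ |Y|²`. Since `ω³ = -1` and `ω² = ω - 1`, dividing by `ω` leaves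
`(D + I₄ - a₂ I₂ - a₃ I₁) conj ω + (real) - λ I₀ = 0`, whose imaginary part reads
`Im λ · I₀ = -Im ω · (D + I₄ - a₂ I₂ - a₃ I₁)`. The right side is negative because `I₄ > 0`.
-/

open Set Filter Complex MeasureTheory

open scoped ComplexConjugate

theorem setIntegral_pos_of_continuousOn {X : Type*} [TopologicalSpace X] [MeasurableSpace X]
    [OpensMeasurableSpace X] {μ : Measure X} [μ.IsOpenPosMeasure] {f : X → ℝ} {s : Set X}
    (hs : IsOpen s) (hfc : ContinuousOn f s) (hfi : IntegrableOn f s μ)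
    (hf : ∀ x ∈ s, 0 ≤ f x) {x : X} (hx : x ∈ s) (hfx : f x ≠ 0) :
    0 < ∫ x in s, f x ∂μ := by
  rw [setIntegral_pos_iff_support_of_nonneg_ae (ae_restrict_of_forall_mem hs.measurableSet hf) hfi,
    Function.support_eq_preimage, inter_comm]
  exact (hfc.isOpen_inter_preimage hs isOpen_compl_singleton).measure_pos μ ⟨x, hx, hfx⟩

section PolynomialWeight

variable {s : Set ℝ} {f : ℝ → ℝ} {n : ℕ}

theorem sum_mul_pow_mul_eq (c : Fin n → ℂ) (t : ℝ) :
    (∑ k, c k * (t : ℂ) ^ (k : ℕ)) * f t = ∑ k, c k * ((t ^ (k : ℕ) * f t : ℝ) : ℂ) := by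
  rw [Finset.sum_mul]
  push_cast
  simp only [mul_assoc]

theorem integrableOn_const_mul_pow_mul (c : ℂ) (k : ℕ)
    (hf : IntegrableOn (fun t => t ^ k * f t) s) :
    IntegrableOn (fun t : ℝ => c * ((t ^ k * f t : ℝ) : ℂ)) s :=
  hf.ofReal.const_mul c

theorem integrableOn_sum_mul_pow_mul (c : Fin n → ℂ)
    (hf : ∀ k : Fin n, IntegrableOn (fun t => t ^ (k : ℕ) * f t) s) :
    IntegrableOn (fun t : ℝ => (∑ k, c k * (t : ℂ) ^ (k : ℕ)) * f t) s := by
  simp only [sum_mul_pow_mul_eq]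
  exact integrable_finsetSum _ fun k _ => integrableOn_const_mul_pow_mul (c k) k (hf k)

theorem setIntegral_sum_mul_pow_mul (c : Fin n → ℂ)
    (hf : ∀ k : Fin n, IntegrableOn (fun t => t ^ (k : ℕ) * f t) s) :
    ∫ t in s, (∑ k, c k * (t : ℂ) ^ (k : ℕ)) * f t =
      ∑ k, c k * ((∫ t in s, t ^ (k : ℕ) * f t : ℝ) : ℂ) := by
  simp only [sum_mul_pow_mul_eq]
  rw [integral_finsetSum Finset.univ fun k _ => integrableOn_const_mul_pow_mul (c k) k (hf k)]
  simp only [integral_const_mul, integral_complex_ofReal]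

end PolynomialWeight

theorem integral_norm_deriv_sq_add_potential_eq_zero {Y Y' Y'' V : ℝ → ℂ} {a : ℝ}
    (hY : ∀ t ∈ Ici a, HasDerivWithinAt Y (Y' t) (Ici a) t)
    (hY' : ∀ t ∈ Ici a, HasDerivWithinAt Y' (Y'' t) (Ici a) t)
    (ha : Y a = 0) (hode : ∀ t ∈ Ioi a, Y'' t = V t * Y t)
    (hY'int : IntegrableOn (fun t => ‖Y' t‖ ^ 2) (Ioi a))
    (hVint : IntegrableOn (fun t => V t * (‖Y t‖ ^ 2 : ℝ)) (Ioi a))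
    (hlim : Tendsto (fun t => conj (Y t) * Y' t) atTop (nhds 0)) :
    ((∫ t in Ioi a, ‖Y' t‖ ^ 2 : ℝ) : ℂ) + ∫ t in Ioi a, V t * (‖Y t‖ ^ 2 : ℝ) = 0 := by
  have hderiv : ∀ t ∈ Ioi a, HasDerivAt (fun t => conj (Y t) * Y' t)
      ((‖Y' t‖ ^ 2 : ℝ) + V t * (‖Y t‖ ^ 2 : ℝ)) t := by
    intro t ht
    have hYt := (hY t (mem_Ici.2 ht.le)).hasDerivAt (Ici_mem_nhds ht)
    have hY't := (hY' t (mem_Ici.2 ht.le)).hasDerivAt (Ici_mem_nhds ht)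
    refine (hYt.star.mul hY't).congr_deriv ?_
    push_cast
    rw [hode t ht, ← Complex.conj_mul', ← Complex.conj_mul']
    simp only [starRingEnd_apply]
    ring
  have hcont : ContinuousWithinAt (fun t => conj (Y t) * Y' t) (Ici a) a :=
    ((hY a self_mem_Ici).continuousWithinAt.star).mul (hY' a self_mem_Ici).continuousWithinAt
  have hY'intC : IntegrableOn (fun t => ((‖Y' t‖ ^ 2 : ℝ) : ℂ)) (Ioi a) := hY'int.ofReal
  have hFTC := integral_Ioi_of_hasDerivAt_of_tendsto hcont hderiv (hY'intC.add hVint) hlim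
  rwa [integral_add hY'intC hVint, integral_complex_ofReal, ha, map_zero, zero_mul, sub_zero]
    at hFTC

theorem integral_norm_deriv_sq_add_quartic_moments_eq_zero {Y Y' Y'' : ℝ → ℂ} {a : ℝ}
    {b₀ b₁ b₂ b₃ : ℂ}
    (hY : ∀ t ∈ Ici a, HasDerivWithinAt Y (Y' t) (Ici a) t)
    (hY' : ∀ t ∈ Ici a, HasDerivWithinAt Y' (Y'' t) (Ici a) t) (ha : Y a = 0)
    (hode : ∀ t ∈ Ioi a,
      Y'' t = ((t : ℂ) ^ 4 + b₃ * (t : ℂ) ^ 3 + b₂ * (t : ℂ) ^ 2 + b₁ * (t : ℂ) + b₀) * Y t)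
    (hY'int : IntegrableOn (fun t => ‖Y' t‖ ^ 2) (Ioi a))
    (hmom : ∀ k ≤ 4, IntegrableOn (fun t => t ^ k * ‖Y t‖ ^ 2) (Ioi a))
    (hlim : Tendsto (fun t => conj (Y t) * Y' t) atTop (nhds 0)) :
    ((∫ t in Ioi a, ‖Y' t‖ ^ 2 : ℝ) : ℂ) +
      (b₀ * ((∫ t in Ioi a, t ^ 0 * ‖Y t‖ ^ 2 : ℝ) : ℂ) +
        b₁ * ((∫ t in Ioi a, t ^ 1 * ‖Y t‖ ^ 2 : ℝ) : ℂ) +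
        b₂ * ((∫ t in Ioi a, t ^ 2 * ‖Y t‖ ^ 2 : ℝ) : ℂ) +
        b₃ * ((∫ t in Ioi a, t ^ 3 * ‖Y t‖ ^ 2 : ℝ) : ℂ) +
        ((∫ t in Ioi a, t ^ 4 * ‖Y t‖ ^ 2 : ℝ) : ℂ)) = 0 := by
  let c : Fin 5 → ℂ := ![b₀, b₁, b₂, b₃, 1]
  have hmom' (k : Fin 5) := hmom k (Nat.le_of_lt_succ k.isLt)
  have hode' : ∀ t ∈ Ioi a, Y'' t = (∑ k, c k * (t : ℂ) ^ (k : ℕ)) * Y t := by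
    intro t ht
    rw [hode t ht]
    congr 1
    simp only [c, Fin.sum_univ_five, Matrix.cons_val, Fin.coe_ofNat_eq_mod, Nat.reduceMod]
    ring
  have henergy := integral_norm_deriv_sq_add_potential_eq_zero hY hY' ha hode' hY'int
    (integrableOn_sum_mul_pow_mul c hmom') hlim
  rw [setIntegral_sum_mul_pow_mul c hmom'] at henergy
  simpa only [c, Fin.sum_univ_five, Matrix.cons_val, Fin.coe_ofNat_eq_mod, Nat.reduceMod, one_mul]
    using henergy

theorem exp_pi_mul_I_div_three : exp (Real.pi * I / 3) = 1 / 2 + Real.sqrt 3 / 2 * I := by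
  rw [show (Real.pi : ℂ) * I / 3 = ((Real.pi / 3 : ℝ) : ℂ) * I by push_cast; ring,
    exp_mul_I, ← ofReal_cos, ← ofReal_sin, Real.cos_pi_div_three, Real.sin_pi_div_three]
  push_cast
  ring

theorem exp_pi_mul_I_div_three_pow_three : exp (Real.pi * I / 3) ^ 3 = -1 := by
  rw [← exp_nat_mul, ← exp_pi_mul_I]
  congr 1
  push_cast
  ring

theorem exp_pi_mul_I_div_three_sq : exp (Real.pi * I / 3) ^ 2 = exp (Real.pi * I / 3) - 1 := by
  have hs : (Real.sqrt 3 : ℂ) ^ 2 = 3 := by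
    exact_mod_cast Real.sq_sqrt (by norm_num : (0 : ℝ) ≤ 3)
  rw [exp_pi_mul_I_div_three]
  linear_combination (Real.sqrt 3 ^ 2 / 4 : ℂ) * I_sq + (-1 / 4 : ℂ) * hs

theorem exp_pi_mul_I_div_three_mul_conj :
    exp (Real.pi * I / 3) * conj (exp (Real.pi * I / 3)) = 1 := by
  rw [mul_conj, normSq_eq_norm_sq, show (Real.pi : ℂ) * I / 3 = ((Real.pi / 3 : ℝ) : ℂ) * I by
    push_cast; ring, norm_exp_ofReal_mul_I]
  simp

theorem im_neg_of_moment_identity {a₁ a₂ a₃ D I₀ I₁ I₂ I₃ I₄ : ℝ} {lam : ℂ}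
    (ha₂ : a₂ ≤ 0) (ha₃ : a₃ ≤ 0) (hD : 0 ≤ D) (hI₀ : 0 ≤ I₀) (hI₁ : 0 ≤ I₁) (hI₂ : 0 ≤ I₂)
    (hI₄ : 0 < I₄)
    (h : (D : ℂ) + (lam * exp (Real.pi * I / 3) ^ 4 * I₀ + a₃ * exp (Real.pi * I / 3) ^ 3 * I₁ +
      a₂ * exp (Real.pi * I / 3) ^ 2 * I₂ + a₁ * exp (Real.pi * I / 3) * I₃ + I₄) = 0) :
    lam.im < 0 := by
  set ω := exp (Real.pi * I / 3) with hω
  rw [show ω ^ 4 = ω ^ 3 * ω by ring, exp_pi_mul_I_div_three_pow_three,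
    exp_pi_mul_I_div_three_sq] at h
  have h' : ((D + I₄ - a₂ * I₂ - a₃ * I₁ : ℝ) : ℂ) * conj ω + ((a₂ * I₂ + a₁ * I₃ : ℝ) : ℂ)
      - lam * I₀ = 0 := by
    push_cast
    linear_combination
      conj ω * h + (lam * I₀ - a₂ * I₂ - a₁ * I₃) * exp_pi_mul_I_div_three_mul_conj
  have him := congrArg im h'
  simp only [sub_im, add_im, mul_im, ofReal_re, ofReal_im, conj_re, conj_im, zero_mul, add_zero,
    zero_im] at him
  have hωim : 0 < ω.im := by
    rw [hω, exp_pi_mul_I_div_three]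
    simp only [add_im, mul_im, div_ofNat_re, div_ofNat_im, ofReal_re, ofReal_im, I_re, I_im,
      one_im]
    norm_num
  have hP : 0 < D + I₄ - a₂ * I₂ - a₃ * I₁ := by nlinarith
  have hlamI₀ : lam.im * I₀ < 0 := by nlinarith [mul_pos hP hωim]
  exact neg_of_mul_neg_left hlamI₀ hI₀

theorem stmt18_general (a₁ a₂ a₃ : ℝ) (ha₂ : a₂ ≤ 0) (ha₃ : a₃ ≤ 0) (lam : ℂ)
    (Y Y' Y'' : ℝ → ℂ)
    (hY : ∀ t ∈ Set.Ici (0 : ℝ), HasDerivWithinAt Y (Y' t) (Set.Ici 0) t)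
    (hY' : ∀ t ∈ Set.Ici (0 : ℝ), HasDerivWithinAt Y' (Y'' t) (Set.Ici 0) t)
    (hne : ∃ t ∈ Set.Ici (0 : ℝ), Y t ≠ 0)
    (h0 : Y 0 = 0)
    (hode : ∀ t ∈ Set.Ici (0 : ℝ),
      Y'' t = ((t : ℂ) ^ 4 +
          (a₁ : ℂ) * Complex.exp (Real.pi * Complex.I / 3) * (t : ℂ) ^ 3 +
          (a₂ : ℂ) * Complex.exp (Real.pi * Complex.I / 3) ^ 2 * (t : ℂ) ^ 2 +
          (a₃ : ℂ) * Complex.exp (Real.pi * Complex.I / 3) ^ 3 * (t : ℂ) +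
          lam * Complex.exp (Real.pi * Complex.I / 3) ^ 4) * Y t)
    (hi1 : MeasureTheory.IntegrableOn (fun t => ‖Y' t‖ ^ 2) (Set.Ici 0))
    (hi2 : ∀ k : ℕ, k ≤ 4 →
      MeasureTheory.IntegrableOn (fun t => t ^ k * ‖Y t‖ ^ 2) (Set.Ici 0))
    (hlim : Filter.Tendsto (fun t => (starRingEnd ℂ) (Y t) * Y' t)
      Filter.atTop (nhds 0)) :
    lam.im < 0 := by
  have hmom (k : ℕ) (hk : k ≤ 4) : IntegrableOn (fun t => t ^ k * ‖Y t‖ ^ 2) (Ioi 0) :=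
    (hi2 k hk).mono_set Ioi_subset_Ici_self
  have hmom_nonneg (k : ℕ) : 0 ≤ ∫ t in Ioi (0 : ℝ), t ^ k * ‖Y t‖ ^ 2 :=
    setIntegral_nonneg measurableSet_Ioi fun t ht =>
      mul_nonneg (pow_nonneg (le_of_lt ht) k) (sq_nonneg _)
  have hD : 0 ≤ ∫ t in Ioi (0 : ℝ), ‖Y' t‖ ^ 2 :=
    setIntegral_nonneg measurableSet_Ioi fun t _ => sq_nonneg _
  have hI₄ : 0 < ∫ t in Ioi (0 : ℝ), t ^ 4 * ‖Y t‖ ^ 2 := by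
    obtain ⟨t₀, ht₀, hYt₀⟩ := hne
    have ht₀pos : 0 < t₀ := lt_of_le_of_ne ht₀ (by rintro rfl; exact hYt₀ h0)
    have hYc : ContinuousOn Y (Ioi 0) := fun t ht =>
      (hY t (Ioi_subset_Ici_self ht)).continuousWithinAt.mono Ioi_subset_Ici_self
    exact setIntegral_pos_of_continuousOn isOpen_Ioi ((continuousOn_pow 4).mul (hYc.norm.pow 2))
      (hmom 4 le_rfl) (fun t ht => mul_nonneg (pow_nonneg (le_of_lt ht) 4) (sq_nonneg _)) ht₀pos
      (by positivity)
  exact im_neg_of_moment_identity ha₂ ha₃ hD (hmom_nonneg 0) (hmom_nonneg 1) (hmom_nonneg 2) hI₄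
    (integral_norm_deriv_sq_add_quartic_moments_eq_zero hY hY' h0
      (fun t ht => hode t (Ioi_subset_Ici_self ht)) (hi1.mono_set Ioi_subset_Ici_self) hmom hlim)

/-- with `ω = exp(iπ/3)`, `a₁ ∈ ℝ`, `a₂ ≤ 0`, `a₃ ≤ 0`, if
`Y : [0,∞) → ℂ` is a twice continuously differentiable, not identically zero
solution of `Y'' = (t⁴ + a₁ωt³ + a₂ω²t² + a₃ω³t + λω⁴)Y` with `Y(0) = 0`,
square-integrable derivative, `∫₀^∞ tᵏ|Y|² < ∞` for `k = 0,…,4`, and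
`conj(Y)Y' → 0` at `+∞`, then `Im(λ) < 0`. -/
theorem stmt18 (a₁ a₂ a₃ : ℝ) (ha₂ : a₂ ≤ 0) (ha₃ : a₃ ≤ 0) (lam : ℂ)
    (Y Y' Y'' : ℝ → ℂ)
    (hY : ∀ t ∈ Set.Ici (0 : ℝ), HasDerivWithinAt Y (Y' t) (Set.Ici 0) t)
    (hY' : ∀ t ∈ Set.Ici (0 : ℝ), HasDerivWithinAt Y' (Y'' t) (Set.Ici 0) t)
    (hY'' : ContinuousOn Y'' (Set.Ici 0))
    (hne : ∃ t ∈ Set.Ici (0 : ℝ), Y t ≠ 0)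
    (h0 : Y 0 = 0)
    (hode : ∀ t ∈ Set.Ici (0 : ℝ),
      Y'' t = ((t : ℂ) ^ 4 +
          (a₁ : ℂ) * Complex.exp (Real.pi * Complex.I / 3) * (t : ℂ) ^ 3 +
          (a₂ : ℂ) * Complex.exp (Real.pi * Complex.I / 3) ^ 2 * (t : ℂ) ^ 2 +
          (a₃ : ℂ) * Complex.exp (Real.pi * Complex.I / 3) ^ 3 * (t : ℂ) +
          lam * Complex.exp (Real.pi * Complex.I / 3) ^ 4) * Y t)
    (hi1 : MeasureTheory.IntegrableOn (fun t => ‖Y' t‖ ^ 2) (Set.Ici 0))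
    (hi2 : ∀ k : ℕ, k ≤ 4 →
      MeasureTheory.IntegrableOn (fun t => t ^ k * ‖Y t‖ ^ 2) (Set.Ici 0))
    (hlim : Filter.Tendsto (fun t => (starRingEnd ℂ) (Y t) * Y' t)
      Filter.atTop (nhds 0)) :
    lam.im < 0 :=
  stmt18_general a₁ a₂ a₃ ha₂ ha₃ lam Y Y' Y'' hY hY' hne h0 hode hi1 hi2 hlim
end
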